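/- arXiv:2004.00766 — 5 statements merged into one kernel-verified Lean document; each statement's English description precedes it below -/
import Mathlib

section
/- Let K, I ≥ 1, let x₁, …, x_I ∈ ℝ^K, and let γ ∈ ℝ. Suppose there exist indices i₁, i₂ ∈ {1, …, I} such that x_{i₁} ≠ x_{i₂} and x_{i₁} ≠ −x_{i₂}. Then there exists a set E ⊆ ℝ^K of Lebesgue measure zero with the following property: for every β ∈ ℝ^K with β ∉ E, letting Γ = max_{1 ≤ j ≤ I} exp(|⟨β, x_j⟩ + γ|), there exists an index i* ∈ {1, …, I} with exp(|⟨β, x_{i*}⟩ + γ|) = Γ, and for every i ∈ {1, …, I} with x_i ≠ x_{i*} and x_i ≠ −x_{i*}, the number Υ_i = exp(|⟨β, x_i⟩ + γ|) satisfies Υ_i < Γ and, for all u, u′ ∈ [0,1], Υ_i^{−1} ≤ exp((⟨β, x_i⟩ + γ)(u − u′)) ≤ Υ_i. -/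
/-!
Two covariate vectors `x i ≠ ±x j` tie, `|⟪β, x i⟫ + γ| = |⟪β, x j⟫ + γ|`, only when `β` lies on
one of the hyperplanes `⟪β, x i - x j⟫ = 0` or `⟪β, x i + x j⟫ = -2γ`, which are Lebesgue-null.
Off the finite union of these hyperplanes, a maximiser `i*` of `Υ` ties with no `x i ≠ ±x i*`,
so every such `Υ i` is strictly below `Γ`. The two-sided bound holds for every `β`, since
`|u - u'| ≤ 1` on `[0, 1]`.
-/

open Real RealInnerProductSpace MeasureTheory Measure

section Hyperplane

variable {E : Type*} [NormedAddCommGroup E] [MeasurableSpace E] [BorelSpace E]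

theorem addHaar_preimage_singleton_of_ne_zero [NormedSpace ℝ E] [FiniteDimensional ℝ E]
    (μ : Measure E) [μ.IsAddHaarMeasure] {f : E →ₗ[ℝ] ℝ} (hf : f ≠ 0) (c : ℝ) :
    μ (f ⁻¹' {c}) = 0 := by
  obtain ⟨p, rfl⟩ := LinearMap.surjective_of_ne_zero hf c
  have hker : LinearMap.ker f ≠ ⊤ := fun h => hf (LinearMap.ker_eq_top.mp h)
  have hfiber : f ⁻¹' {f p} = (fun y => -p + y) ⁻¹' LinearMap.ker f := by
    ext y
    simp only [Set.mem_preimage, Set.mem_singleton_iff, SetLike.mem_coe, LinearMap.mem_ker,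
      map_add, map_neg, neg_add_eq_zero]
    exact eq_comm
  rw [hfiber, measure_preimage_add]
  exact addHaar_submodule μ _ hker

variable [InnerProductSpace ℝ E] [FiniteDimensional ℝ E] (μ : Measure E) [μ.IsAddHaarMeasure]

theorem addHaar_setOf_inner_eq {v : E} (hv : v ≠ 0) (c : ℝ) : μ {β | ⟪β, v⟫ = c} = 0 := by
  have hf : (innerSL ℝ v : E →L[ℝ] ℝ).toLinearMap ≠ 0 := fun h => by
    simpa [hv] using LinearMap.congr_fun h v
  convert addHaar_preimage_singleton_of_ne_zero μ hf c using 2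
  ext β
  simp [real_inner_comm]

theorem addHaar_setOf_abs_inner_add_eq {u w : E} (hsub : u ≠ w) (hadd : u ≠ -w) (γ : ℝ) :
    μ {β | |⟪β, u⟫ + γ| = |⟪β, w⟫ + γ|} = 0 := by
  have hcover : {β | |⟪β, u⟫ + γ| = |⟪β, w⟫ + γ|} =
      {β | ⟪β, u - w⟫ = 0} ∪ {β | ⟪β, u + w⟫ = -(2 * γ)} := by
    ext β
    simp only [Set.mem_ofPred_eq, Set.mem_union, abs_eq_abs, inner_sub_right, inner_add_right]
    constructor <;> rintro (h | h) <;> [left; right; left; right] <;> linarith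
  rw [hcover]
  exact measure_union_null (addHaar_setOf_inner_eq μ (sub_ne_zero.mpr hsub) 0)
    (addHaar_setOf_inner_eq μ (add_eq_zero_iff_eq_neg.not.mpr hadd) _)

end Hyperplane

section AbsTieSet

variable {E ι : Type*} [NormedAddCommGroup E] [InnerProductSpace ℝ E]

def absTieSet (x : ι → E) (γ : ℝ) : Set E :=
  ⋃ (i) (j) (_ : x i ≠ x j ∧ x i ≠ -x j), {β | |⟪β, x i⟫ + γ| = |⟪β, x j⟫ + γ|}

theorem abs_inner_add_ne_of_notMem_absTieSet {x : ι → E} {γ : ℝ} {β : E}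
    (hβ : β ∉ absTieSet x γ) {i j : ι} (hsub : x i ≠ x j) (hadd : x i ≠ -x j) :
    |⟪β, x i⟫ + γ| ≠ |⟪β, x j⟫ + γ| :=
  fun h => hβ (Set.mem_iUnion₂.mpr ⟨i, j, Set.mem_iUnion.mpr ⟨⟨hsub, hadd⟩, h⟩⟩)

theorem addHaar_absTieSet [Countable ι] [FiniteDimensional ℝ E] [MeasurableSpace E]
    [BorelSpace E] (μ : Measure E) [μ.IsAddHaarMeasure] (x : ι → E) (γ : ℝ) :
    μ (absTieSet x γ) = 0 :=
  measure_iUnion_null fun _ => measure_iUnion_null fun _ => measure_iUnion_null fun h =>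
    addHaar_setOf_abs_inner_add_eq μ h.1 h.2 γ

end AbsTieSet

theorem exp_mul_mem_Icc_of_abs_le_one (a : ℝ) {t : ℝ} (ht : |t| ≤ 1) :
    exp (a * t) ∈ Set.Icc (exp |a|)⁻¹ (exp |a|) := by
  have hat : |a * t| ≤ |a| := by
    rw [abs_mul]
    exact mul_le_of_le_one_right (abs_nonneg a) ht
  rw [← exp_neg]
  exact ⟨exp_le_exp.mpr (neg_le_of_abs_le hat), exp_le_exp.mpr (le_of_abs_le hat)⟩

theorem stmt4_general (K I : ℕ) (hI : 1 ≤ I)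
    (x : Fin I → EuclideanSpace ℝ (Fin K)) (γ : ℝ) :
    ∃ E : Set (EuclideanSpace ℝ (Fin K)), MeasureTheory.volume E = 0 ∧
      ∀ β : EuclideanSpace ℝ (Fin K), β ∉ E →
        ∃ istar : Fin I,
          Real.exp |⟪β, x istar⟫ + γ| =
            (Finset.univ.sup' (Finset.univ_nonempty_iff.mpr (Fin.pos_iff_nonempty.mp hI))
              fun j => Real.exp |⟪β, x j⟫ + γ|) ∧
          ∀ i : Fin I, x i ≠ x istar → x i ≠ -x istar →
            Real.exp |⟪β, x i⟫ + γ| <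
              (Finset.univ.sup' (Finset.univ_nonempty_iff.mpr (Fin.pos_iff_nonempty.mp hI))
                fun j => Real.exp |⟪β, x j⟫ + γ|) ∧
            ∀ u ∈ Set.Icc (0:ℝ) 1, ∀ u' ∈ Set.Icc (0:ℝ) 1,
              (Real.exp |⟪β, x i⟫ + γ|)⁻¹ ≤ Real.exp ((⟪β, x i⟫ + γ) * (u - u')) ∧
              Real.exp ((⟪β, x i⟫ + γ) * (u - u')) ≤ Real.exp |⟪β, x i⟫ + γ| := by
  refine ⟨absTieSet x γ, addHaar_absTieSet volume x γ, fun β hβ => ?_⟩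
  obtain ⟨istar, -, hstar⟩ := Finset.exists_mem_eq_sup' _ fun j => exp |⟪β, x j⟫ + γ|
  refine ⟨istar, hstar.symm, fun i hsub hadd => ⟨?_, fun u hu u' hu' => ?_⟩⟩
  · have hle := Finset.le_sup' (fun j => exp |⟪β, x j⟫ + γ|) (Finset.mem_univ i)
    rw [hstar] at hle ⊢
    exact hle.lt_of_ne (exp_injective.ne (abs_inner_add_ne_of_notMem_absTieSet hβ hsub hadd))
  · exact exp_mul_mem_Icc_of_abs_le_one _ (abs_sub_le_of_nonneg_of_le hu.1 hu.2 hu'.1 hu'.2)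

/-- Theorem 1 of the paper: if two matched sets have covariate vectors with
`x_{i₁} ≠ ±x_{i₂}`, then there is a Lebesgue-null set `E ⊆ ℝ^K` such that for every `β ∉ E`,
letting `Γ = max_j exp |⟨β, x_j⟩ + γ|`, there is an index `i*` attaining the max, and for
every matched set `i` with `x_i ≠ ±x_{i*}` the quantity `Υ_i = exp |⟨β, x_i⟩ + γ|` satisfies
`Υ_i < Γ` and `Υ_i⁻¹ ≤ exp ((⟨β, x_i⟩ + γ)(u - u')) ≤ Υ_i` for all `u, u' ∈ [0,1]`. -/
theorem stmt4 (K I : ℕ) (hK : 1 ≤ K) (hI : 1 ≤ I)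
    (x : Fin I → EuclideanSpace ℝ (Fin K)) (γ : ℝ)
    (hx : ∃ i₁ i₂ : Fin I, x i₁ ≠ x i₂ ∧ x i₁ ≠ -x i₂) :
    ∃ E : Set (EuclideanSpace ℝ (Fin K)), MeasureTheory.volume E = 0 ∧
      ∀ β : EuclideanSpace ℝ (Fin K), β ∉ E →
        ∃ istar : Fin I,
          Real.exp |⟪β, x istar⟫ + γ| =
            (Finset.univ.sup' (Finset.univ_nonempty_iff.mpr (Fin.pos_iff_nonempty.mp hI))
              fun j => Real.exp |⟪β, x j⟫ + γ|) ∧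
          ∀ i : Fin I, x i ≠ x istar → x i ≠ -x istar →
            Real.exp |⟪β, x i⟫ + γ| <
              (Finset.univ.sup' (Finset.univ_nonempty_iff.mpr (Fin.pos_iff_nonempty.mp hI))
                fun j => Real.exp |⟪β, x j⟫ + γ|) ∧
            ∀ u ∈ Set.Icc (0:ℝ) 1, ∀ u' ∈ Set.Icc (0:ℝ) 1,
              (Real.exp |⟪β, x i⟫ + γ|)⁻¹ ≤ Real.exp ((⟪β, x i⟫ + γ) * (u - u')) ∧
              Real.exp ((⟪β, x i⟫ + γ) * (u - u')) ≤ Real.exp |⟪β, x i⟫ + γ| :=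
  stmt4_general K I hI x γ
end

section
/- Let β̃, γ ∈ ℝ with γ ≠ 0, set λ = (β̃ + γ)/γ and Γ = max(exp(|γ|), exp(|β̃ + γ|)), and for x̃ ∈ [0,1] define Γ_λ(x̃) = Γ^{|(λ−1)x̃+1|} if |λ| ≤ 1 and Γ_λ(x̃) = Γ^{|(1−λ^{−1})x̃+λ^{−1}|} if |λ| > 1. Then for every x̃ ∈ [0,1] and all u, u′ ∈ [0,1], Γ_λ(x̃)^{−1} ≤ exp((β̃x̃ + γ)(u − u′)) ≤ Γ_λ(x̃); moreover these bounds are sharp in the sense that for every x̃ ∈ [0,1] there exist u, u′ ∈ [0,1] with exp((β̃x̃ + γ)(u − u′)) = Γ_λ(x̃). -/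
/-! Writing `β̃ = (λ - 1) γ`, both branches of `Γ_λ(x̃)` are `exp |β̃ x̃ + γ|`: the branch
`|λ| ≤ 1` is the one where `Γ = exp |γ|`, the other the one where `Γ = exp |λ γ|`, and in each
case the exponent times `log Γ` is `|β̃ x̃ + γ|`. The two-sided bound on `exp (c (u - u'))` by
`exp |c|` for `u, u' ∈ [0,1]` is then attained at `{u, u'} = {0, 1}`. -/

/-- The sharper sensitivity bound `Γ_λ(x̃)` of Theorem 2 of the paper:
`Γ ^ |(λ - 1) x̃ + 1|` if `|λ| ≤ 1`, and `Γ ^ |(1 - λ⁻¹) x̃ + λ⁻¹|` if `|λ| > 1`. -/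
noncomputable def GammaLam (lam Γ xt : ℝ) : ℝ :=
  if |lam| ≤ 1 then Γ ^ |(lam - 1) * xt + 1| else Γ ^ |(1 - lam⁻¹) * xt + lam⁻¹|

open Real Set

lemma exp_abs_rpow_abs (c s : ℝ) : exp |c| ^ |s| = exp |c * s| := by
  rw [← exp_mul, abs_mul]

theorem GammaLam_max_exp_eq (lam γ xt : ℝ) :
    GammaLam lam (max (exp |γ|) (exp |lam * γ|)) xt = exp |(lam - 1) * γ * xt + γ| := by
  unfold GammaLam
  split_ifs with hlam
  · have hle : |lam * γ| ≤ |γ| := by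
      rw [abs_mul]
      exact mul_le_of_le_one_left (abs_nonneg γ) hlam
    rw [max_eq_left (exp_le_exp.mpr hle), exp_abs_rpow_abs]
    ring_nf
  · have hlam : 1 < |lam| := not_le.mp hlam
    have hlam0 : lam ≠ 0 := abs_pos.mp (one_pos.trans hlam)
    have hle : |γ| ≤ |lam * γ| := by
      rw [abs_mul]
      exact le_mul_of_one_le_left (abs_nonneg γ) hlam.le
    rw [max_eq_right (exp_le_exp.mpr hle), exp_abs_rpow_abs]
    congr 2
    field_simp

lemma abs_mul_sub_le_abs (c : ℝ) {u u' : ℝ} (hu : u ∈ Icc (0 : ℝ) 1)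
    (hu' : u' ∈ Icc (0 : ℝ) 1) : |c * (u - u')| ≤ |c| := by
  rw [abs_mul]
  exact mul_le_of_le_one_right (abs_nonneg c) (dist_le_of_mem_Icc_01 hu hu')

lemma exp_abs_inv_le_exp_mul_sub_le_exp_abs (c : ℝ) {u u' : ℝ} (hu : u ∈ Icc (0 : ℝ) 1)
    (hu' : u' ∈ Icc (0 : ℝ) 1) :
    (exp |c|)⁻¹ ≤ exp (c * (u - u')) ∧ exp (c * (u - u')) ≤ exp |c| := by
  obtain ⟨hlow, hup⟩ := abs_le.mp (abs_mul_sub_le_abs c hu hu')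
  exact ⟨exp_neg |c| ▸ exp_le_exp.mpr hlow, exp_le_exp.mpr hup⟩

lemma exists_exp_mul_sub_eq_exp_abs (c : ℝ) :
    ∃ u ∈ Icc (0 : ℝ) 1, ∃ u' ∈ Icc (0 : ℝ) 1, exp (c * (u - u')) = exp |c| := by
  rcases le_or_gt 0 c with hc | hc
  · exact ⟨1, right_mem_Icc.mpr zero_le_one, 0, left_mem_Icc.mpr zero_le_one, by
      rw [abs_of_nonneg hc]; ring_nf⟩
  · exact ⟨0, left_mem_Icc.mpr zero_le_one, 1, right_mem_Icc.mpr zero_le_one, by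
      rw [abs_of_neg hc]; ring_nf⟩

/-- main bound of Theorem 2: for every `x̃ ∈ [0,1]` and all `u, u' ∈ [0,1]`,
`Γ_λ(x̃)⁻¹ ≤ exp ((β̃ x̃ + γ)(u - u')) ≤ Γ_λ(x̃)`, and the upper bound is attained for some
`u, u' ∈ [0,1]`. -/
theorem stmt8 (btil γ : ℝ) (hγ : γ ≠ 0) (lam Γ : ℝ)
    (hlam : lam = (btil + γ) / γ)
    (hΓ : Γ = max (Real.exp |γ|) (Real.exp |btil + γ|)) :
    ∀ xt ∈ Set.Icc (0:ℝ) 1,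
      (∀ u ∈ Set.Icc (0:ℝ) 1, ∀ u' ∈ Set.Icc (0:ℝ) 1,
        (GammaLam lam Γ xt)⁻¹ ≤ Real.exp ((btil * xt + γ) * (u - u')) ∧
        Real.exp ((btil * xt + γ) * (u - u')) ≤ GammaLam lam Γ xt) ∧
      ∃ u ∈ Set.Icc (0:ℝ) 1, ∃ u' ∈ Set.Icc (0:ℝ) 1,
        Real.exp ((btil * xt + γ) * (u - u')) = GammaLam lam Γ xt := by
  intro xt _
  have hlamγ : lam * γ = btil + γ := by rw [hlam, div_mul_cancel₀ _ hγ]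
  have hGamma : GammaLam lam Γ xt = exp |btil * xt + γ| := by
    rw [hΓ, ← hlamγ, GammaLam_max_exp_eq]
    congr 2
    linear_combination xt * hlamγ
  rw [hGamma]
  exact ⟨fun u hu u' hu' => exp_abs_inv_le_exp_mul_sub_le_exp_abs _ hu hu',
    exists_exp_mul_sub_eq_exp_abs _⟩
end

section
/- Let β̃, γ ∈ ℝ with γ ≠ 0, set λ = (β̃ + γ)/γ and Γ = max(exp(|γ|), exp(|β̃ + γ|)), and for x̃ ∈ [0,1] define Γ_λ(x̃) = Γ^{|(λ−1)x̃+1|} if |λ| ≤ 1 and Γ_λ(x̃) = Γ^{|(1−λ^{−1})x̃+λ^{−1}|} if |λ| > 1. Then for every x̃ ∈ [0,1], Γ_λ(x̃) = Γ holds if and only if at least one of the following three conditions holds: (a) λ = 1; (b) |λ| ≤ 1 and x̃ = 0; (c) |λ| ≥ 1 and x̃ = 1. -/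
/-! Since `Γ > 1`, `Γ ^ a = Γ` forces `a = 1`. Both exponents are absolute values of a convex
combination `(1 - x̃) a + x̃ b` of two points of `[-1, 1]` (`a = 1, b = λ`, resp. `a = λ⁻¹, b = 1`),
and such a combination equals `±1` only at `x̃ = 0` with `|a| = 1`, at `x̃ = 1` with `|b| = 1`,
or when `a = b = ±1`. -/

theorem one_lt_max_exp_abs {γ : ℝ} (hγ : γ ≠ 0) (b : ℝ) :
    1 < max (Real.exp |γ|) (Real.exp |b|) :=
  (Real.one_lt_exp_iff.mpr (abs_pos.mpr hγ)).trans_le (le_max_left _ _)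

theorem Real.rpow_eq_self_iff {x y : ℝ} (hx : 1 < x) : x ^ y = x ↔ y = 1 := by
  simpa using Real.rpow_right_inj (zero_lt_one.trans hx) hx.ne' (y := y) (z := 1)

theorem abs_sub_one_mul_add_one_eq_one_iff {lam x : ℝ} (hlam : |lam| ≤ 1)
    (hx : x ∈ Set.Icc (0 : ℝ) 1) :
    |(lam - 1) * x + 1| = 1 ↔ lam = 1 ∨ x = 0 ∨ (lam = -1 ∧ x = 1) := by
  obtain ⟨hx0, hx1⟩ := hx
  obtain ⟨hlam0, hlam1⟩ := abs_le.mp hlam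
  rw [abs_eq zero_le_one]
  constructor
  · rintro (h | h)
    · have : (lam - 1) * x = 0 := by linarith
      rcases mul_eq_zero.mp this with h' | h'
      · exact .inl (by linarith)
      · exact .inr (.inl h')
    · -- `(lam - 1) * x ≥ -2` with equality only at `lam = -1`, `x = 1`
      exact .inr (.inr ⟨by nlinarith, by nlinarith⟩)
  · rintro (rfl | rfl | ⟨rfl, rfl⟩) <;> norm_num

theorem abs_one_sub_mul_add_eq_one_iff {μ x : ℝ} (hμ : |μ| < 1) (hx : x ∈ Set.Icc (0 : ℝ) 1) :
    |(1 - μ) * x + μ| = 1 ↔ x = 1 := by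
  obtain ⟨hx0, hx1⟩ := hx
  obtain ⟨hμ0, hμ1⟩ := abs_lt.mp hμ
  rw [abs_eq zero_le_one]
  constructor
  · rintro (h | h)
    · have : (1 - μ) * (x - 1) = 0 := by linarith
      exact sub_eq_zero.mp ((mul_eq_zero.mp this).resolve_left (by linarith))
    · nlinarith
  · rintro rfl
    exact .inl (by ring)

theorem stmt10_general (btil γ : ℝ) (hγ : γ ≠ 0) (lam Γ : ℝ)
    (hΓ : Γ = max (Real.exp |γ|) (Real.exp |btil + γ|)) :
    ∀ xt ∈ Set.Icc (0:ℝ) 1,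
      (GammaLam lam Γ xt = Γ ↔
        lam = 1 ∨ (|lam| ≤ 1 ∧ xt = 0) ∨ (1 ≤ |lam| ∧ xt = 1)) := by
  intro xt hxt
  have hΓ1 : 1 < Γ := hΓ ▸ one_lt_max_exp_abs hγ _
  unfold GammaLam
  split_ifs with hlam
  · rw [Real.rpow_eq_self_iff hΓ1, abs_sub_one_mul_add_one_eq_one_iff hlam hxt]
    have : 1 ≤ |lam| ↔ lam = 1 ∨ lam = -1 := by
      rw [← abs_eq zero_le_one]; exact ⟨hlam.antisymm, fun h => h.symm.le⟩
    grind
  · rw [not_le] at hlam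
    have hinv : |lam⁻¹| < 1 := by rw [abs_inv]; exact inv_lt_one_of_one_lt₀ hlam
    rw [Real.rpow_eq_self_iff hΓ1, abs_one_sub_mul_add_eq_one_iff hinv hxt]
    have hne : lam ≠ 1 := by rintro rfl; norm_num at hlam
    grind

/-- equality characterization in Theorem 2: for every `x̃ ∈ [0,1]`,
`Γ_λ(x̃) = Γ` iff (a) `λ = 1`, or (b) `|λ| ≤ 1` and `x̃ = 0`, or (c) `|λ| ≥ 1` and `x̃ = 1`. -/
theorem stmt10 (btil γ : ℝ) (hγ : γ ≠ 0) (lam Γ : ℝ)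
    (hlam : lam = (btil + γ) / γ)
    (hΓ : Γ = max (Real.exp |γ|) (Real.exp |btil + γ|)) :
    ∀ xt ∈ Set.Icc (0:ℝ) 1,
      (GammaLam lam Γ xt = Γ ↔
        lam = 1 ∨ (|lam| ≤ 1 ∧ xt = 0) ∨ (1 ≤ |lam| ∧ xt = 1)) :=
  stmt10_general btil γ hγ lam Γ hΓ
end

section
/- Let β̃, γ ∈ ℝ with γ ≠ 0, set λ = (β̃ + γ)/γ and Γ = max(exp(|γ|), exp(|β̃ + γ|)), and suppose |λ| < 1. Then: (i) there exist u, u′ ∈ [0,1] with exp(γ(u − u′)) = Γ (sharpness of the Rosenbaum bounds at x = 0); and (ii) for all u, u′ ∈ [0,1], Γ^{−|λ|} ≤ exp((β̃ + γ)(u − u′)) ≤ Γ^{|λ|}, and there exist u, u′ ∈ [0,1] with exp((β̃ + γ)(u − u′)) = Γ^{|λ|}. -/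
/-! When `|λ| < 1` we have `|β̃ + γ| = |γ| |λ| < |γ|`, so `Γ = exp |γ|` and
`Γ ^ (±|λ|) = exp (±|β̃ + γ|)`. Since `u - u'` ranges over `[-1, 1]`, `exp (a (u - u'))` ranges over
`[exp (-|a|), exp |a|]`, the upper end being attained at `(u, u') = (1, 0)` or `(0, 1)` according
to the sign of `a`. -/

open Set Real

lemma exists_mem_Icc_mul_sub_eq_abs (a : ℝ) :
    ∃ u ∈ Icc (0 : ℝ) 1, ∃ u' ∈ Icc (0 : ℝ) 1, a * (u - u') = |a| := by
  rcases le_or_gt 0 a with ha | ha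
  · exact ⟨1, by norm_num, 0, by norm_num, by rw [abs_of_nonneg ha]; ring⟩
  · exact ⟨0, by norm_num, 1, by norm_num, by rw [abs_of_neg ha]; ring⟩

lemma abs_mul_sub_le_abs_of_mem_Icc (a : ℝ) {u u' : ℝ} (hu : u ∈ Icc (0 : ℝ) 1)
    (hu' : u' ∈ Icc (0 : ℝ) 1) : |a * (u - u')| ≤ |a| := by
  rw [abs_mul]
  exact mul_le_of_le_one_right (abs_nonneg a) (abs_sub_le_of_nonneg_of_le hu.1 hu.2 hu'.1 hu'.2)

lemma exp_mul_sub_mem_Icc (a : ℝ) {u u' : ℝ} (hu : u ∈ Icc (0 : ℝ) 1)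
    (hu' : u' ∈ Icc (0 : ℝ) 1) : exp (a * (u - u')) ∈ Icc (exp (-|a|)) (exp |a|) :=
  let h := abs_le.mp (abs_mul_sub_le_abs_of_mem_Icc a hu hu')
  ⟨exp_le_exp.mpr h.1, exp_le_exp.mpr h.2⟩

/-- Corollary 1, case 2: with `λ = (β̃ + γ)/γ` and
`Γ = max (exp |γ|) (exp |β̃ + γ|)`, if `|λ| < 1` then (i) there exist `u, u' ∈ [0,1]` with
`exp (γ (u - u')) = Γ` (sharpness at `x = 0`); and (ii) for all `u, u' ∈ [0,1]`,
`Γ ^ (-|λ|) ≤ exp ((β̃ + γ)(u - u')) ≤ Γ ^ |λ|`, the upper bound being attained. -/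
theorem stmt12 (btil γ : ℝ) (hγ : γ ≠ 0) (lam Γ : ℝ)
    (hlam : lam = (btil + γ) / γ)
    (hΓ : Γ = max (Real.exp |γ|) (Real.exp |btil + γ|))
    (habs : |lam| < 1) :
    (∃ u ∈ Set.Icc (0:ℝ) 1, ∃ u' ∈ Set.Icc (0:ℝ) 1,
      Real.exp (γ * (u - u')) = Γ) ∧
    (∀ u ∈ Set.Icc (0:ℝ) 1, ∀ u' ∈ Set.Icc (0:ℝ) 1,
      Γ ^ (-|lam|) ≤ Real.exp ((btil + γ) * (u - u')) ∧
      Real.exp ((btil + γ) * (u - u')) ≤ Γ ^ |lam|) ∧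
    (∃ u ∈ Set.Icc (0:ℝ) 1, ∃ u' ∈ Set.Icc (0:ℝ) 1,
      Real.exp ((btil + γ) * (u - u')) = Γ ^ |lam|) := by
  have hγ_pos : 0 < |γ| := abs_pos.mpr hγ
  have hγ_mul_lam : |γ| * |lam| = |btil + γ| := by
    rw [hlam, abs_div]
    field_simp
  have hlt : |btil + γ| < |γ| := by
    rw [← hγ_mul_lam]
    exact mul_lt_of_lt_one_right hγ_pos habs
  have hΓ_eq : Γ = exp |γ| := by rw [hΓ, max_eq_left (exp_le_exp.mpr hlt.le)]
  have hΓ_rpow (t : ℝ) : Γ ^ t = exp (|γ| * t) := by rw [hΓ_eq, exp_mul]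
  refine ⟨?_, fun u hu u' hu' => ?_, ?_⟩
  · obtain ⟨u, hu, u', hu', h⟩ := exists_mem_Icc_mul_sub_eq_abs γ
    exact ⟨u, hu, u', hu', by rw [h, hΓ_eq]⟩
  · rw [hΓ_rpow, hΓ_rpow, mul_neg, hγ_mul_lam]
    exact exp_mul_sub_mem_Icc (btil + γ) hu hu'
  · obtain ⟨u, hu, u', hu', h⟩ := exists_mem_Icc_mul_sub_eq_abs (btil + γ)
    exact ⟨u, hu, u', hu', by rw [h, hΓ_rpow, hγ_mul_lam]⟩
end

section
/- Let c₁, c₂ ∈ {0, 1}, θ ∈ ℝ, and u₁, u₂ ∈ [0,1]. Define p = (c₁·exp(θ(u₁ − u₂)) + c₂) / (1 + exp(θ(u₁ − u₂))), and define p̃ = 0 if c₁ = c₂ = 0, p̃ = 1 if c₁ = c₂ = 1, and p̃ = exp(|θ|)/(1 + exp(|θ|)) if c₁ ≠ c₂. Then p ≤ p̃, and for each choice of c₁, c₂, θ there exist u₁, u₂ ∈ [0,1] attaining p = p̃. -/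
/-!
Writing `d = θ (u₁ - u₂)` and `σ` for the logistic sigmoid, `p = c₁ σ(d) + c₂ σ(-d)`.
As `(u₁, u₂)` ranges over the unit square, `d` ranges over `[-|θ|, |θ|]` and reaches both
endpoints. For `c₁ = c₂` the value `p = c₁` does not depend on `d` (as `σ(d) + σ(-d) = 1`);
otherwise `p` is `σ(±d)`, which by monotonicity of `σ` is maximal at `±d = |θ|`.
-/

/-- The worst-case contribution probability `p̃`: `0` if `c₁ = c₂ = 0`, `1` if
`c₁ = c₂ = 1`, and `exp |θ| / (1 + exp |θ|)` if `c₁ ≠ c₂`. -/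
noncomputable def ptilde (c₁ c₂ θ : ℝ) : ℝ :=
  if c₁ = 0 ∧ c₂ = 0 then 0
  else if c₁ = 1 ∧ c₂ = 1 then 1
  else Real.exp |θ| / (1 + Real.exp |θ|)

open Real Set

lemma mul_exp_add_div_one_add_exp (a b x : ℝ) :
    (a * exp x + b) / (1 + exp x) = a * sigmoid x + b * sigmoid (-x) := by
  rw [sigmoid_def, sigmoid_def, exp_neg, neg_neg]
  field_simp
  ring

lemma abs_mul_sub_le_abs_s14 {θ u₁ u₂ : ℝ} (hu₁ : u₁ ∈ Icc (0 : ℝ) 1) (hu₂ : u₂ ∈ Icc (0 : ℝ) 1) :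
    |θ * (u₁ - u₂)| ≤ |θ| := by
  rw [abs_mul]
  have hu : |u₁ - u₂| ≤ 1 := by
    simpa using abs_sub_le_of_le_of_le hu₁.1 hu₁.2 hu₂.1 hu₂.2
  exact mul_le_of_le_one_right (abs_nonneg θ) hu

lemma exists_mem_Icc_mul_sub_eq {θ d : ℝ} (hd : |d| = |θ|) :
    ∃ v₁ ∈ Icc (0 : ℝ) 1, ∃ v₂ ∈ Icc (0 : ℝ) 1, θ * (v₁ - v₂) = d := by
  rcases abs_eq_abs.mp hd with rfl | rfl
  · exact ⟨1, right_mem_Icc.mpr zero_le_one, 0, left_mem_Icc.mpr zero_le_one, by ring⟩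
  · exact ⟨0, left_mem_Icc.mpr zero_le_one, 1, right_mem_Icc.mpr zero_le_one, by ring⟩

lemma ptilde_eq_sigmoid {c₁ c₂ : ℝ} (θ : ℝ) (h₀ : ¬(c₁ = 0 ∧ c₂ = 0)) (h₁ : ¬(c₁ = 1 ∧ c₂ = 1)) :
    ptilde c₁ c₂ θ = sigmoid |θ| := by
  rw [ptilde, if_neg h₀, if_neg h₁, sigmoid_def, exp_neg]
  field_simp
  ring

lemma mul_sigmoid_add_mul_sigmoid_neg_le_ptilde {c₁ c₂ : ℝ} (hc₁ : c₁ = 0 ∨ c₁ = 1)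
    (hc₂ : c₂ = 0 ∨ c₂ = 1) {θ d : ℝ} (hd : |d| ≤ |θ|) :
    c₁ * sigmoid d + c₂ * sigmoid (-d) ≤ ptilde c₁ c₂ θ := by
  rcases hc₁ with rfl | rfl <;> rcases hc₂ with rfl | rfl
  · simp [ptilde]
  · rw [ptilde_eq_sigmoid θ (by norm_num) (by norm_num), zero_mul, zero_add, one_mul]
    exact sigmoid_le ((neg_le_abs d).trans hd)
  · rw [ptilde_eq_sigmoid θ (by norm_num) (by norm_num), zero_mul, add_zero, one_mul]
    exact sigmoid_le ((le_abs_self d).trans hd)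
  · simp [ptilde, sigmoid_neg]

lemma exists_abs_eq_mul_sigmoid_add_mul_sigmoid_neg_eq_ptilde {c₁ c₂ : ℝ}
    (hc₁ : c₁ = 0 ∨ c₁ = 1) (hc₂ : c₂ = 0 ∨ c₂ = 1) (θ : ℝ) :
    ∃ d, |d| = |θ| ∧ c₁ * sigmoid d + c₂ * sigmoid (-d) = ptilde c₁ c₂ θ := by
  rcases hc₁ with rfl | rfl <;> rcases hc₂ with rfl | rfl
  · exact ⟨|θ|, abs_abs θ, by simp [ptilde]⟩
  · refine ⟨-|θ|, by rw [abs_neg, abs_abs], ?_⟩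
    rw [ptilde_eq_sigmoid θ (by norm_num) (by norm_num), neg_neg]
    ring
  · refine ⟨|θ|, abs_abs θ, ?_⟩
    rw [ptilde_eq_sigmoid θ (by norm_num) (by norm_num)]
    ring
  · exact ⟨|θ|, abs_abs θ, by simp [ptilde, sigmoid_neg]⟩

/-- with `p = (c₁ exp (θ(u₁ - u₂)) + c₂) / (1 + exp (θ(u₁ - u₂)))` for
`c₁, c₂ ∈ {0,1}` and `u₁, u₂ ∈ [0,1]`, one has `p ≤ p̃`, and `p = p̃` is attained for some
choice of `u₁, u₂ ∈ [0,1]`. -/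
theorem stmt14 (c₁ c₂ θ : ℝ) (hc₁ : c₁ = 0 ∨ c₁ = 1) (hc₂ : c₂ = 0 ∨ c₂ = 1)
    (u₁ u₂ : ℝ) (hu₁ : u₁ ∈ Set.Icc (0:ℝ) 1) (hu₂ : u₂ ∈ Set.Icc (0:ℝ) 1) :
    (c₁ * Real.exp (θ * (u₁ - u₂)) + c₂) / (1 + Real.exp (θ * (u₁ - u₂))) ≤
      ptilde c₁ c₂ θ ∧
    ∃ v₁ ∈ Set.Icc (0:ℝ) 1, ∃ v₂ ∈ Set.Icc (0:ℝ) 1,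
      (c₁ * Real.exp (θ * (v₁ - v₂)) + c₂) / (1 + Real.exp (θ * (v₁ - v₂))) =
        ptilde c₁ c₂ θ := by
  simp only [mul_exp_add_div_one_add_exp]
  refine ⟨mul_sigmoid_add_mul_sigmoid_neg_le_ptilde hc₁ hc₂ (abs_mul_sub_le_abs_s14 hu₁ hu₂), ?_⟩
  obtain ⟨d, hd, hpd⟩ := exists_abs_eq_mul_sigmoid_add_mul_sigmoid_neg_eq_ptilde hc₁ hc₂ θ
  obtain ⟨v₁, hv₁, v₂, hv₂, hv⟩ := exists_mem_Icc_mul_sub_eq hd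
  exact ⟨v₁, hv₁, v₂, hv₂, hv ▸ hpd⟩
end
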